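/- arXiv:1108.3197 — 2 statements merged into one kernel-verified Lean document; each statement's English description precedes it below -/
import Mathlib

section
/- For any even positive integer n, the sum over k from 1 to n-1 of ((-2)^k / k)·C(n, k) equals -2·H_n + H_{n/2} - 2^n/n. -/
noncomputable def H (n : ℕ) : ℚ := ∑ i ∈ Finset.Icc 1 n, (1 : ℚ) / i

/-!
Since `C(n+1,k) - C(n,k) = k/(n+1) · C(n+1,k)` for `k ≥ 1`, the binomial theorem gives, by
induction on `n`, `∑_{k=1}^n y^k/k · C(n,k) = ∑_{j=1}^n ((1+y)^j - 1)/j`. At `y = -2` the summand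
on the right is `-2/j` for odd `j` and `0` for even `j`, so for `n = 2m` the full sum is
`H_m - 2 H_{2m}`. The term `k = n` that the theorem leaves out is `2^n/n`.
-/

open Finset

theorem sum_Icc_choose_mul_pow {R : Type*} [CommRing R] (y : R) (n : ℕ) :
    ∑ k ∈ Icc 1 n, (n.choose k : R) * y ^ k = (1 + y) ^ n - 1 := by
  rw [add_comm, add_pow, range_eq_Ico, sum_eq_sum_Ico_succ_bot (by omega : 0 < n + 1),
    zero_add, Ico_add_one_right_eq_Icc]
  simp [mul_comm]

section

variable {K : Type*} [Field K] [CharZero K]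

theorem choose_succ_sub_choose_div (n : ℕ) {k : ℕ} (hk : k ≠ 0) :
    (((n + 1).choose k : K) - n.choose k) / k = (n + 1).choose k / (n + 1) := by
  obtain ⟨j, rfl⟩ := Nat.exists_eq_add_one_of_ne_zero hk
  have hmul : ((n : K) + 1) * n.choose j = (n + 1).choose (j + 1) * (j + 1) := by
    exact_mod_cast Nat.add_one_mul_choose_eq n j
  have hpascal : ((n + 1).choose (j + 1) : K) = n.choose j + n.choose (j + 1) := by
    exact_mod_cast Nat.choose_succ_succ' n j
  push_cast
  rw [div_eq_div_iff (Nat.cast_add_one_ne_zero j) (Nat.cast_add_one_ne_zero n)]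
  linear_combination hmul + ((n : K) + 1) * hpascal

theorem sum_Icc_pow_div_mul_choose (y : K) (n : ℕ) :
    ∑ k ∈ Icc 1 n, y ^ k / k * n.choose k = ∑ j ∈ Icc 1 n, ((1 + y) ^ j - 1) / j := by
  induction n with
  | zero => simp
  | succ n ih =>
    have hstep : ∑ k ∈ Icc 1 (n + 1), y ^ k / k * (n + 1).choose k
        = ∑ k ∈ Icc 1 (n + 1), y ^ k / k * n.choose k
          + (∑ k ∈ Icc 1 (n + 1), ((n + 1).choose k : K) * y ^ k) / (n + 1) := by
      rw [sum_div, ← sum_add_distrib]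
      refine sum_congr rfl fun k hk => ?_
      have hdiff := choose_succ_sub_choose_div (K := K) n
        (Nat.one_le_iff_ne_zero.mp (mem_Icc.mp hk).1)
      linear_combination y ^ k * hdiff
    rw [hstep, sum_Icc_succ_top (by omega : 1 ≤ n + 1), Nat.choose_succ_self,
      sum_Icc_choose_mul_pow, ih, sum_Icc_succ_top (by omega : 1 ≤ n + 1)]
    push_cast
    ring

end

theorem H_eq_harmonic (n : ℕ) : H n = harmonic n := by
  simp [H, harmonic_eq_sum_Icc]

theorem sum_Icc_two_mul_neg_one_pow_sub_one_div (m : ℕ) :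
    ∑ j ∈ Icc 1 (2 * m), ((-1 : ℚ) ^ j - 1) / j = harmonic m - 2 * harmonic (2 * m) := by
  induction m with
  | zero => simp
  | succ m ih =>
    have hodd := odd_two_mul_add_one m
    rw [show 2 * (m + 1) = 2 * m + 1 + 1 by ring, sum_Icc_succ_top (by omega),
      sum_Icc_succ_top (by omega), ih, hodd.neg_one_pow, hodd.add_one.neg_one_pow,
      harmonic_succ, harmonic_succ, harmonic_succ]
    push_cast
    field_simp
    ring

theorem stmt2_general (n : ℕ) (heven : Even n) :
    ∑ k ∈ Finset.Icc 1 (n - 1), ((-2 : ℚ) ^ k / k) * (n.choose k)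
      = -2 * H n + H (n / 2) - (2 : ℚ) ^ n / n := by
  obtain ⟨m, rfl⟩ := heven
  rw [← two_mul, Nat.mul_div_cancel_left m two_pos, H_eq_harmonic, H_eq_harmonic]
  rcases Nat.eq_zero_or_pos m with rfl | hm
  · simp
  have h := sum_Icc_pow_div_mul_choose (-2 : ℚ) (2 * m)
  rw [show (1 : ℚ) + -2 = -1 by norm_num, sum_Icc_two_mul_neg_one_pow_sub_one_div,
    ← insert_Icc_sub_one_right_eq_Icc (by omega : 1 ≤ 2 * m),
    sum_insert (by simp only [mem_Icc]; omega), Nat.choose_self, (even_two_mul m).neg_pow] at h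
  push_cast at h ⊢
  linarith

theorem stmt2 (n : ℕ) (hn : 0 < n) (heven : Even n) :
    ∑ k ∈ Finset.Icc 1 (n - 1), ((-2 : ℚ) ^ k / k) * (n.choose k)
      = -2 * H n + H (n / 2) - (2 : ℚ) ^ n / n :=
  stmt2_general n heven
end

section
/- For any prime p ≥ 3 and any k with 1 ≤ k ≤ p-1, the binomial coefficient C(p-1, k) is congruent to (-1)^k - (-1)^k·p·H_k + (-1)^k·(p²/2)·(H_k² - H_{k,2}) modulo p³, i.e., the rational number (-1)^k·C(p-1,k) - 1 + p·H_k - (p²/2)(H_k² - H_{k,2}) has p-adic valuation at least 3. -/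
noncomputable def H2 (n : ℕ) : ℚ := ∑ i ∈ Finset.Icc 1 n, (1 : ℚ) / (i : ℚ) ^ 2

lemma H_succ (k : ℕ) : H (k + 1) = H k + 1 / ((k : ℚ) + 1) := by
  rw [H, Finset.sum_Icc_succ_top (by omega), ← H]
  push_cast; rfl

lemma H2_succ (k : ℕ) : H2 (k + 1) = H2 k + 1 / ((k : ℚ) + 1) ^ 2 := by
  rw [H2, Finset.sum_Icc_succ_top (by omega), ← H2]
  push_cast; rfl

lemma neg_one_pow_succ_mul_choose_succ {K : Type*} [Field K] [CharZero K] (n k : ℕ) :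
    (-1 : K) ^ (k + 1) * n.choose (k + 1) =
      (-1) ^ k * n.choose k * (1 - ((n : K) + 1) / ((k : K) + 1)) := by
  have hk : (k : K) + 1 ≠ 0 := Nat.cast_add_one_ne_zero k
  have hrec : (n.choose (k + 1) : K) * (k + 1) = n.choose k * (n - k) := by
    rcases le_or_gt k n with hkn | hnk
    · rw [← Nat.cast_sub hkn]
      exact_mod_cast Nat.choose_succ_right_eq n k
    · simp [Nat.choose_eq_zero_of_lt hnk, Nat.choose_eq_zero_of_lt (hnk.trans (Nat.lt_succ_self k))]
  field_simp
  linear_combination -(-1 : K) ^ k * hrec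

-- The expansion of `∏_{i=1}^k (1 - x/i)` to second order in `x`.
noncomputable def truncatedExpansion (x : ℚ) (k : ℕ) : ℚ := 1 - x * H k + x ^ 2 / 2 * (H k ^ 2 - H2 k)

lemma truncatedExpansion_succ (x : ℚ) (k : ℕ) :
    truncatedExpansion x (k + 1) = truncatedExpansion x k * (1 - x / ((k : ℚ) + 1)) +
      x ^ 3 * ((H k ^ 2 - H2 k) * 2⁻¹ * ((k : ℚ) + 1)⁻¹) := by
  simp only [truncatedExpansion, H_succ, H2_succ]
  field_simp
  ring

section
variable {p : ℕ} [hp : Fact p.Prime]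

lemma Rat.padicValuation_natCast_eq_one {n : ℕ} (h : ¬ p ∣ n) : Rat.padicValuation p n = 1 := by
  rw [← Int.cast_natCast, Rat.padicValuation_cast, Int.padicValuation_eq_one_iff]
  exact_mod_cast h

lemma inv_natCast_mem_integer {n : ℕ} (h : ¬ p ∣ n) : (n : ℚ)⁻¹ ∈ (Rat.padicValuation p).integer := by
  rw [Valuation.mem_integer_iff, map_inv₀, Rat.padicValuation_natCast_eq_one h, inv_one]

lemma padicValRat_nonneg_of_mem_integer {x : ℚ} (hx : x ≠ 0) (h : x ∈ (Rat.padicValuation p).integer) :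
    0 ≤ padicValRat p x := by
  rw [Valuation.mem_integer_iff] at h
  simp only [Rat.padicValuation, Valuation.coe_mk, MonoidWithZeroHom.coe_mk, ZeroHom.coe_mk, if_neg hx] at h
  rw [← WithZero.exp_zero, WithZero.exp_le_exp] at h
  omega

lemma H_mem_integer {k : ℕ} (hk : k < p) : H k ∈ (Rat.padicValuation p).integer :=
  Subring.sum_mem _ fun i hi => by
    obtain ⟨hi1, hik⟩ := Finset.mem_Icc.1 hi
    simpa only [one_div] using inv_natCast_mem_integer (Nat.not_dvd_of_pos_of_lt hi1 (hik.trans_lt hk))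

lemma H2_mem_integer {k : ℕ} (hk : k < p) : H2 k ∈ (Rat.padicValuation p).integer :=
  Subring.sum_mem _ fun i hi => by
    obtain ⟨hi1, hik⟩ := Finset.mem_Icc.1 hi
    simpa only [one_div, inv_pow] using
      pow_mem (inv_natCast_mem_integer (Nat.not_dvd_of_pos_of_lt hi1 (hik.trans_lt hk))) 2

lemma eq_zero_or_le_padicValRat_of_eq_pow_mul {x e : ℚ} (n : ℕ)
    (he : e ∈ (Rat.padicValuation p).integer) (hx : x = p ^ n * e) :
    x = 0 ∨ n ≤ padicValRat p x := by
  rcases eq_or_ne e 0 with rfl | he0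
  · simp [hx]
  · right
    have hp0 : (p : ℚ) ≠ 0 := Nat.cast_ne_zero.2 hp.out.ne_zero
    rw [hx, padicValRat.mul (pow_ne_zero n hp0) he0, padicValRat.pow, padicValRat.self hp.out.one_lt]
    linarith [padicValRat_nonneg_of_mem_integer he0 he]

theorem exists_choose_pred_sub_truncatedExpansion_eq (hp3 : 3 ≤ p) {k : ℕ} (hk : k < p) :
    ∃ e ∈ (Rat.padicValuation p).integer,
      (-1 : ℚ) ^ k * (p - 1).choose k - truncatedExpansion p k = p ^ 3 * e := by
  induction k with
  | zero => exact ⟨0, zero_mem _, by simp [truncatedExpansion, H, H2]⟩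
  | succ k ih =>
    obtain ⟨e, he, hek⟩ := ih (by omega)
    have hpred : ((p - 1 : ℕ) : ℚ) + 1 = p := by exact_mod_cast Nat.sub_add_cancel hp.out.one_le
    have hinv : ((k : ℚ) + 1)⁻¹ ∈ (Rat.padicValuation p).integer := by
      simpa using inv_natCast_mem_integer (Nat.not_dvd_of_pos_of_lt k.succ_pos hk)
    have hinv2 : (2 : ℚ)⁻¹ ∈ (Rat.padicValuation p).integer := by
      simpa using inv_natCast_mem_integer (Nat.not_dvd_of_pos_of_lt two_pos hp3)
    refine ⟨e * (1 - p * ((k : ℚ) + 1)⁻¹) - (H k ^ 2 - H2 k) * 2⁻¹ * ((k : ℚ) + 1)⁻¹, ?_, ?_⟩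
    · have hH := H_mem_integer (by omega : k < p)
      have hH2 := H2_mem_integer (by omega : k < p)
      exact sub_mem (mul_mem he (sub_mem (one_mem _) (mul_mem (natCast_mem _ p) hinv)))
        (mul_mem (mul_mem (sub_mem (pow_mem hH 2) hH2) hinv2) hinv)
    · rw [neg_one_pow_succ_mul_choose_succ, hpred, truncatedExpansion_succ]
      linear_combination (1 - (p : ℚ) / ((k : ℚ) + 1)) * hek
end

theorem stmt7_general (p : ℕ) (hp : p.Prime) (hp3 : 3 ≤ p) (k : ℕ) (hk2 : k ≤ p - 1) :
    ((-1 : ℚ) ^ k * ((p - 1).choose k)) - (1 - (p : ℚ) * H k + ((p : ℚ) ^ 2 / 2) * (H k ^ 2 - H2 k)) = 0 ∨ (3 : ℤ) ≤ padicValRat p (((-1 : ℚ) ^ k * ((p - 1).choose k)) - (1 - (p : ℚ) * H k + ((p : ℚ) ^ 2 / 2) * (H k ^ 2 - H2 k))) := by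
  have : Fact p.Prime := ⟨hp⟩
  obtain ⟨e, he, hek⟩ := exists_choose_pred_sub_truncatedExpansion_eq hp3 (by omega : k < p)
  exact eq_zero_or_le_padicValRat_of_eq_pow_mul 3 he hek

theorem stmt7 (p : ℕ) (hp : p.Prime) (hp3 : 3 ≤ p) (k : ℕ) (hk1 : 1 ≤ k) (hk2 : k ≤ p - 1) :
    ((-1 : ℚ) ^ k * ((p - 1).choose k)) - (1 - (p : ℚ) * H k + ((p : ℚ) ^ 2 / 2) * (H k ^ 2 - H2 k)) = 0 ∨ (3 : ℤ) ≤ padicValRat p (((-1 : ℚ) ^ k * ((p - 1).choose k)) - (1 - (p : ℚ) * H k + ((p : ℚ) ^ 2 / 2) * (H k ^ 2 - H2 k))) :=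
  stmt7_general p hp hp3 k hk2
end
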